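/- arXiv:math/0306115 — 2 statements merged into one kernel-verified Lean document; each statement's English description precedes it below -/
import Mathlib

section
/- For any natural numbers N, k, i with k < i, \(\sum_{n=k}^{i-1} \binom{N}{n} \alpha_k^n \alpha_{i-n}^{N-n} = \alpha_k^N - \alpha_i^N\), where \(\alpha_k^n = (-1)^{k-1}\binom{n-1}{k-1}\). -/
open Finset

/-- `α_k^n = (-1)^(k-1) * C(n-1, k-1)` -/
def alphaCoef (k n : ℕ) : ℤ := (-1) ^ (k - 1) * (Nat.choose (n - 1) (k - 1))

namespace AlphaAux

open Polynomial

lemma coeff_one_add_C_mul_X_pow {R : Type*} [CommRing R] (a : R) (n m : ℕ) :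
    ((1 + C a * X)^n).coeff m = (n.choose m : R) * a ^ m := by
  rw [add_comm, add_pow]
  simp only [one_pow, mul_one, mul_pow, ← C_pow, ← C_eq_natCast, finset_sum_coeff,
    coeff_mul_C, coeff_C_mul, coeff_X_pow, mul_ite, ite_mul, mul_one, mul_zero, zero_mul]
  rw [Finset.sum_ite_eq (Finset.range (n+1)) m]
  by_cases h : m ∈ Finset.range (n+1)
  · rw [if_pos h]; ring
  · rw [if_neg h]
    rw [Finset.mem_range, not_lt] at h
    rw [Nat.choose_eq_zero_of_lt (by omega)]
    simp

lemma coeff_one_sub_X_pow {R : Type*} [CommRing R] (q m : ℕ) :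
    ((1 - X : Polynomial R)^q).coeff m = (q.choose m : R) * (-1)^m := by
  have h := coeff_one_add_C_mul_X_pow (-1 : R) q m
  rw [map_neg, map_one] at h
  rw [← h]
  norm_num [sub_eq_add_neg]

lemma choose_conv (p : ℕ) : ∀ q r : ℕ, ∑ a ∈ range (r+1), (p+a).choose p * ((q + (r-a)).choose q)
    = (p+q+r+1).choose r := by
  intro q
  induction q with
  | zero =>
    intro r
    simp only [Nat.zero_add, Nat.choose_zero_right, mul_one]
    have h1 : ∀ a, (p+a).choose p = (a+p).choose p := fun a => by rw [add_comm]
    simp only [h1]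
    rw [Nat.sum_range_add_choose r p]
    have h2 : (p+0+r+1) = r+p+1 := by omega
    rw [h2, ← Nat.choose_symm (by omega : p+1 ≤ r+p+1)]
    congr 1
    omega
  | succ q ihq =>
    intro r
    induction r with
    | zero => simp
    | succ r ihr =>
      rw [Finset.sum_range_succ]
      have hsplit : ∀ a ∈ range (r+1),
          (p+a).choose p * ((q+1) + (r+1-a)).choose (q+1)
          = (p+a).choose p * (q + (r+1-a)).choose q
            + (p+a).choose p * ((q+1) + (r-a)).choose (q+1) := by
        intro a ha
        rw [mem_range] at ha
        have h1 : (q+1) + (r+1-a) = ((q+1)+(r-a))+1 := by omega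
        have h2 : q + (r+1-a) = (q+1)+(r-a) := by omega
        rw [h1, Nat.choose_succ_succ, h2, Nat.mul_add]
      rw [Finset.sum_congr rfl hsplit, Finset.sum_add_distrib, ihr]
      have hA := Finset.sum_range_succ (fun a => (p+a).choose p * (q + (r+1-a)).choose q) (r+1)
      rw [ihq (r+1)] at hA
      simp only [Nat.sub_self, Nat.add_zero, Nat.choose_self, mul_one] at hA
      have hlast : (q+1) + (r+1-(r+1)) = q+1 := by omega
      rw [hlast, Nat.choose_self, mul_one, add_right_comm, ← hA]
      have e1 : p+q+(r+1)+1 = p+q+r+2 := by omega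
      have e2 : p+(q+1)+r+1 = p+q+r+2 := by omega
      have e3 : p+(q+1)+(r+1)+1 = p+q+r+2+1 := by omega
      rw [e1, e2, e3]
      have hp : (p+q+r+2+1).choose (r+1) = (p+q+r+2).choose r + (p+q+r+2).choose (r+1) :=
        Nat.choose_succ_succ _ _
      rw [hp]
      exact Nat.add_comm _ _

lemma choose_flip (p b : ℕ) : (p+b).choose b = (p+b).choose p := by
  have h := Nat.choose_symm (Nat.le_add_left b p)
  rw [Nat.add_sub_cancel] at h
  exact h.symm

lemma sum2nat (N k i : ℕ) (hk : 1 ≤ k) (hki : k < i) (hiN : i ≤ N) :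
    ∑ l ∈ range (N-1), (l.choose (k-1)) * ((N-2-l).choose (i-1-k)) = (N-1).choose (i-1) := by
  have hsub : Ico (k-1) (k-1+(N-i+1)) ⊆ range (N-1) := by
    intro x hx; rw [mem_Ico] at hx; rw [mem_range]; omega
  have hvan : ∀ x ∈ range (N-1), x ∉ Ico (k-1) (k-1+(N-i+1)) →
      (x.choose (k-1)) * ((N-2-x).choose (i-1-k)) = 0 := by
    intro x hx hnot
    rw [mem_range] at hx
    rw [mem_Ico, not_and_or] at hnot
    rcases hnot with h | h
    · rw [Nat.choose_eq_zero_of_lt (show x < k-1 by omega), zero_mul]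
    · rw [Nat.choose_eq_zero_of_lt (show N-2-x < i-1-k by omega), mul_zero]
  rw [← Finset.sum_subset hsub hvan, Finset.sum_Ico_eq_sum_range,
    show k-1+(N-i+1)-(k-1) = (N-i)+1 from by omega]
  have hcongr : ∀ a ∈ range ((N-i)+1),
      ((k-1)+a).choose (k-1) * ((N-2-(k-1+a)).choose (i-1-k))
      = ((k-1)+a).choose (k-1) * (((i-1-k) + ((N-i)-a)).choose (i-1-k)) := by
    intro a ha
    rw [mem_range] at ha
    rw [show N-2-(k-1+a) = (i-1-k)+((N-i)-a) from by omega]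
  rw [Finset.sum_congr rfl hcongr, choose_conv (k-1) (i-1-k) (N-i),
    show (k-1)+(i-1-k)+(N-i)+1 = N-1 from by omega,
    ← Nat.choose_symm (show N-i ≤ N-1 from by omega),
    show N-1-(N-i) = i-1 from by omega]

lemma sum1nat (N k i : ℕ) (hk : 1 ≤ k) (hki : k < i) (hiN : i ≤ N) :
    ∑ a ∈ range k, ((N-i)+a).choose a * ((i-2-a).choose (k-1-a)) = (N-1).choose (k-1) := by
  have hcongr : ∀ a ∈ range ((k-1)+1),
      ((N-i)+a).choose a * ((i-2-a).choose (k-1-a))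
      = ((N-i)+a).choose (N-i) * (((i-1-k) + ((k-1)-a)).choose (i-1-k)) := by
    intro a ha
    rw [mem_range] at ha
    rw [choose_flip (N-i) a, show i-2-a = (i-1-k)+((k-1)-a) from by omega,
      choose_flip (i-1-k) ((k-1)-a)]
  rw [Finset.sum_congr (show range k = range ((k-1)+1) from by rw [Nat.sub_add_cancel hk]) hcongr,
    choose_conv (N-i) (i-1-k) (k-1),
    show (N-i)+(i-1-k)+(k-1)+1 = N-1 from by omega]

noncomputable def FF (N : ℕ) : Polynomial (Polynomial ℤ) :=
  ∑ n ∈ Ico 1 N, (N.choose n : Polynomial (Polynomial ℤ)) * X^n * (1-X)^(N-1-n)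
      * C ((1-Polynomial.X)^(n-1))

noncomputable def GG (N : ℕ) : Polynomial (Polynomial ℤ) :=
  (∑ j ∈ range (N-1), (1 - C Polynomial.X * X)^j * (X * C (1-Polynomial.X))^(N-2-j))
  + ∑ l ∈ range (N-1), (1 - C Polynomial.X * X)^l * (1-X)^(N-2-l)

lemma idB (M : ℕ) : (1 - X) * C (1 - Polynomial.X) * FF (M+2)
    = (1 - C Polynomial.X * X)^(M+2) - (1-X)^(M+2) - (X * C (1-Polynomial.X))^(M+2) := by
  set w : Polynomial (Polynomial ℤ) := X * C (1-Polynomial.X) with hw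
  have hsum : ∑ n ∈ range (M+3), w^n * (1-X)^(M+2-n) * ((M+2).choose n : Polynomial (Polynomial ℤ))
      = (1 - C Polynomial.X * X)^(M+2) := by
    rw [← add_pow]
    congr 1
    rw [hw, map_sub, map_one]
    ring
  rw [FF, Finset.mul_sum]
  have hterm : ∀ n ∈ Ico 1 (M+2),
      (1 - X) * C (1-Polynomial.X) * (((M+2).choose n : Polynomial (Polynomial ℤ)) * X^n
        * (1-X)^(M+2-1-n) * C ((1-Polynomial.X)^(n-1)))
      = w^n * (1-X)^(M+2-n) * ((M+2).choose n : Polynomial (Polynomial ℤ)) := by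
    intro n hn
    rw [mem_Ico] at hn
    obtain ⟨n, rfl⟩ : ∃ m, n = m + 1 := ⟨n - 1, by omega⟩
    have e1 : M+2-1-(n+1) = M-n := by omega
    have e2 : M+2-(n+1) = (M-n)+1 := by omega
    have e3 : n+1-1 = n := by omega
    rw [e1, e2, e3, hw, mul_pow, map_pow]
    ring
  rw [Finset.sum_congr rfl hterm]
  have hsplit : ∑ n ∈ range (M+3), w^n * (1-X)^(M+2-n) * ((M+2).choose n : Polynomial (Polynomial ℤ))
      = (1-X)^(M+2)
        + (∑ n ∈ Ico 1 (M+2), w^n * (1-X)^(M+2-n) * ((M+2).choose n : Polynomial (Polynomial ℤ)))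
        + w^(M+2) := by
    rw [range_eq_Ico, Finset.sum_eq_sum_Ico_succ_bot (by omega)]
    rw [Finset.sum_Ico_succ_top (by omega : 1 ≤ M+2)]
    simp [Nat.choose_self, Nat.choose_zero_right]
    ring
  rw [hsplit] at hsum
  rw [← hsum]
  ring

lemma idC (M : ℕ) : (1 - X) * C (1 - Polynomial.X) * (X * GG (M+2))
    = (1 - C Polynomial.X * X)^(M+2) - (1-X)^(M+2) - (X * C (1-Polynomial.X))^(M+2) := by
  set v : Polynomial (Polynomial ℤ) := 1 - C Polynomial.X * X with hv
  set w : Polynomial (Polynomial ℤ) := X * C (1-Polynomial.X) with hw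
  have hvw : v - w = 1 - X := by rw [hv, hw, map_sub, map_one]; ring
  have hvu : v - (1 - X) = w := by rw [hv, hw, map_sub, map_one]; ring
  have h1 : (∑ j ∈ range (M+2), v^j * w^(M+2-1-j)) * (1 - X) = v^(M+2) - w^(M+2) := by
    rw [← hvw]; exact geom_sum₂_mul v w (M+2)
  have h2 : (∑ l ∈ range (M+1), v^l * (1-X)^(M+1-1-l)) * w = v^(M+1) - (1-X)^(M+1) := by
    rw [← hvu]; exact geom_sum₂_mul v (1-X) (M+1)
  have h3 : ∑ j ∈ range (M+2), v^j * w^(M+2-1-j)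
      = (∑ j ∈ range (M+1), v^j * w^(M-j)) * w + v^(M+1) := by
    rw [Finset.sum_range_succ]
    have e : M+2-1-(M+1) = 0 := by omega
    rw [e, pow_zero, mul_one, Finset.sum_mul]
    rw [add_left_inj]
    refine Finset.sum_congr rfl fun j hj => ?_
    rw [mem_range] at hj
    have e2 : M+2-1-j = (M-j)+1 := by omega
    rw [e2, pow_succ]
    ring
  have egg : GG (M+2) = (∑ j ∈ range (M+1), v^j * w^(M-j)) + ∑ l ∈ range (M+1), v^l * (1-X)^(M-l) := by
    rw [GG]
    norm_num [hv, hw, map_sub, map_one]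
  have h4 : ∀ l ∈ range (M+1), v^l * (1-X)^(M+1-1-l) = v^l * (1-X)^(M-l) := by
    intro l hl
    rw [Nat.add_sub_cancel]
  rw [Finset.sum_congr rfl h4] at h2
  rw [egg]
  have expand : (1 - X) * C (1-Polynomial.X) * (X * ((∑ j ∈ range (M+1), v^j * w^(M-j))
        + ∑ l ∈ range (M+1), v^l * (1-X)^(M-l)))
      = ((∑ j ∈ range (M+1), v^j * w^(M-j)) * w + v^(M+1)) * (1-X)
        - (1-X)^(M+1) * (1-X)
        + ((∑ l ∈ range (M+1), v^l * (1-X)^(M-l)) * w - (v^(M+1) - (1-X)^(M+1))) * (1-X) := by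
    rw [hw]; ring
  rw [expand, ← h3, h1, h2]
  ring

lemma nz1 : (1 - X : Polynomial (Polynomial ℤ)) ≠ 0 := by
  intro h
  have := congrArg (Polynomial.coeff · 1) h
  simp [Polynomial.coeff_one] at this

lemma nz2 : (C (1 - Polynomial.X) : Polynomial (Polynomial ℤ)) ≠ 0 := by
  rw [Ne, Polynomial.C_eq_zero]
  intro h
  have := congrArg (Polynomial.coeff · 1) h
  simp [Polynomial.coeff_one] at this

lemma term_coeff (N n i k : ℕ) :
    ((((N.choose n : Polynomial (Polynomial ℤ))) * X^n * (1-X)^(N-1-n)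
        * C ((1-Polynomial.X)^(n-1))).coeff (i-1)).coeff (k-1)
    = if n ≤ i-1 then (N.choose n : ℤ) * (((N-1-n).choose (i-1-n) : ℤ) * (-1)^(i-1-n))
        * (((n-1).choose (k-1) : ℤ) * (-1)^(k-1)) else 0 := by
  have h1 : ((N.choose n : Polynomial (Polynomial ℤ))) * X^n * (1-X)^(N-1-n)
        * C ((1-Polynomial.X)^(n-1))
      = ((N.choose n : Polynomial (Polynomial ℤ)) * C ((1-Polynomial.X)^(n-1))
          * (1-X)^(N-1-n)) * X^n := by ring
  rw [h1, Polynomial.coeff_mul_X_pow']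
  split
  · rw [← Polynomial.C_eq_natCast, ← map_mul, Polynomial.coeff_C_mul, coeff_one_sub_X_pow]
    have h2 : ((N.choose n : Polynomial ℤ) * (1-Polynomial.X)^(n-1)
          * (((N-1-n).choose (i-1-n) : Polynomial ℤ) * (-1)^(i-1-n)))
        = Polynomial.C ((N.choose n : ℤ) * (((N-1-n).choose (i-1-n) : ℤ) * (-1)^(i-1-n)))
            * (1-Polynomial.X)^(n-1) := by
      simp only [map_mul, map_natCast, map_pow, map_neg, map_one]
      ring
    rw [h2, Polynomial.coeff_C_mul, coeff_one_sub_X_pow]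
  · simp

lemma coeffF (N k i : ℕ) (hk : 1 ≤ k) (hki : k < i) (hiN : i ≤ N) :
    ((FF N).coeff (i-1)).coeff (k-1)
      = ∑ n ∈ Ico k i, (N.choose n : ℤ) * alphaCoef k n * alphaCoef (i-n) (N-n) := by
  rw [FF, finset_sum_coeff, finset_sum_coeff]
  have hsub : Ico k i ⊆ Ico 1 N := Finset.Ico_subset_Ico hk hiN
  have h0 : ∀ x ∈ Ico 1 N, x ∉ Ico k i →
      ((((N.choose x : Polynomial (Polynomial ℤ))) * X^x * (1-X)^(N-1-x)
        * C ((1-Polynomial.X)^(x-1))).coeff (i-1)).coeff (k-1) = 0 := by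
    intro x hx hnot
    rw [term_coeff]
    rw [mem_Ico] at hx hnot
    by_cases hxi : x ≤ i-1
    · rw [if_pos hxi]
      have : x < k := by omega
      rw [Nat.choose_eq_zero_of_lt (by omega : x-1 < k-1)]
      simp
    · rw [if_neg hxi]
  rw [← Finset.sum_subset hsub h0]
  refine Finset.sum_congr rfl fun n hn => ?_
  rw [term_coeff]
  rw [mem_Ico] at hn
  rw [if_pos (by omega)]
  have e1 : i-1-n = i-n-1 := by omega
  have e2 : N-1-n = N-n-1 := by omega
  rw [e1, e2]
  simp only [alphaCoef]
  ring

lemma coeff_v_pow (l t : ℕ) :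
    (((1 - C Polynomial.X * X : Polynomial (Polynomial ℤ)))^l).coeff t
      = (l.choose t : Polynomial ℤ) * (-Polynomial.X)^t := by
  rw [show (1 - C Polynomial.X * X : Polynomial (Polynomial ℤ))
      = 1 + C (-Polynomial.X) * X from by rw [map_neg]; ring]
  exact coeff_one_add_C_mul_X_pow _ l t

lemma term2_coeff (l q i k : ℕ) (h : k-1 ≤ i-2) :
    ((((1 - C Polynomial.X * X)^l * (1-X)^q : Polynomial (Polynomial ℤ)).coeff (i-2)).coeff (k-1))
    = (l.choose (k-1) : ℤ) * (-1)^(k-1) * ((q.choose (i-2-(k-1)) : ℤ) * (-1)^(i-2-(k-1))) := by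
  rw [Polynomial.coeff_mul, Nat.sum_antidiagonal_eq_sum_range_succ_mk, finset_sum_coeff]
  have hcongr : ∀ t ∈ range (i-2+1),
      ((((1 - C Polynomial.X * X)^l : Polynomial (Polynomial ℤ)).coeff t
        * (((1-X)^q : Polynomial (Polynomial ℤ)).coeff (i-2-t))).coeff (k-1))
      = if k-1 = t then (l.choose t : ℤ) * (-1)^t
          * ((q.choose (i-2-t) : ℤ) * (-1)^(i-2-t)) else 0 := by
    intro t ht
    rw [coeff_v_pow, coeff_one_sub_X_pow]
    have hre : ((l.choose t : Polynomial ℤ) * (-Polynomial.X)^t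
          * ((q.choose (i-2-t) : Polynomial ℤ) * (-1)^(i-2-t)))
        = Polynomial.C ((l.choose t : ℤ) * (-1)^t * ((q.choose (i-2-t) : ℤ) * (-1)^(i-2-t)))
          * Polynomial.X^t := by
      simp only [map_mul, map_natCast, map_pow, map_neg, map_one]
      ring
    rw [hre, Polynomial.coeff_C_mul, Polynomial.coeff_X_pow, mul_ite, mul_one, mul_zero]
  rw [Finset.sum_congr rfl hcongr, Finset.sum_ite_eq (range (i-2+1)) (k-1),
    if_pos (by rw [mem_range]; omega)]

lemma term1_coeff (j m i k : ℕ) :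
    ((((1 - C Polynomial.X * X)^j * (X^m * C ((1-Polynomial.X)^m))
        : Polynomial (Polynomial ℤ)).coeff (i-2)).coeff (k-1))
    = if m ≤ i-2 then (if i-2-m ≤ k-1 then (j.choose (i-2-m) : ℤ) * (-1)^(i-2-m)
        * ((m.choose (k-1-(i-2-m)) : ℤ) * (-1)^(k-1-(i-2-m))) else 0) else 0 := by
  rw [show ((1 - C Polynomial.X * X)^j * (X^m * C ((1-Polynomial.X)^m))
        : Polynomial (Polynomial ℤ))
      = ((1 - C Polynomial.X * X)^j * C ((1-Polynomial.X)^m)) * X^m from by ring,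
    Polynomial.coeff_mul_X_pow']
  split
  · rw [Polynomial.coeff_mul_C, coeff_v_pow]
    have hre : ((j.choose (i-2-m) : Polynomial ℤ) * (-Polynomial.X)^(i-2-m)
          * (1-Polynomial.X)^m)
        = (Polynomial.C ((j.choose (i-2-m) : ℤ) * (-1)^(i-2-m)) * (1-Polynomial.X)^m)
          * Polynomial.X^(i-2-m) := by
      simp only [map_mul, map_natCast, map_pow, map_neg, map_one]
      ring
    rw [hre, Polynomial.coeff_mul_X_pow']
    split
    · rw [Polynomial.coeff_C_mul, coeff_one_sub_X_pow]
    · rfl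
  · simp

lemma coeffG (N k i : ℕ) (hk : 1 ≤ k) (hki : k < i) (hiN : i ≤ N) :
    ((X * GG N).coeff (i-1)).coeff (k-1) = alphaCoef k N - alphaCoef i N := by
  rw [show i-1 = (i-2)+1 from by omega, Polynomial.coeff_X_mul]
  rw [GG, Polynomial.coeff_add, Polynomial.coeff_add]
  have hG1 : (((∑ j ∈ range (N-1),
        (1 - C Polynomial.X * X)^j * (X * C (1-Polynomial.X))^(N-2-j)
        : Polynomial (Polynomial ℤ))).coeff (i-2)).coeff (k-1)
      = alphaCoef k N := by
    rw [finset_sum_coeff, finset_sum_coeff]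
    have hterm : ∀ j ∈ range (N-1),
        ((((1 - C Polynomial.X * X)^j * (X * C (1-Polynomial.X))^(N-2-j)
          : Polynomial (Polynomial ℤ)).coeff (i-2)).coeff (k-1))
        = if N-2-j ≤ i-2 then (if i-2-(N-2-j) ≤ k-1 then
            (j.choose (i-2-(N-2-j)) : ℤ) * (-1)^(i-2-(N-2-j))
            * (((N-2-j).choose (k-1-(i-2-(N-2-j))) : ℤ) * (-1)^(k-1-(i-2-(N-2-j)))) else 0)
          else 0 := by
      intro j _
      rw [mul_pow, ← map_pow]
      exact term1_coeff j (N-2-j) i k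
    rw [Finset.sum_congr rfl hterm]
    have hsub : Ico (N-i) (N-i+k) ⊆ range (N-1) := by
      intro x hx; rw [mem_Ico] at hx; rw [mem_range]; omega
    have hvan : ∀ x ∈ range (N-1), x ∉ Ico (N-i) (N-i+k) →
        (if N-2-x ≤ i-2 then (if i-2-(N-2-x) ≤ k-1 then
            (x.choose (i-2-(N-2-x)) : ℤ) * (-1)^(i-2-(N-2-x))
            * (((N-2-x).choose (k-1-(i-2-(N-2-x))) : ℤ) * (-1)^(k-1-(i-2-(N-2-x)))) else 0)
          else 0) = 0 := by
      intro x hx hnot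
      rw [mem_range] at hx
      rw [mem_Ico, not_and_or] at hnot
      rcases hnot with h | h
      · rw [if_neg (by omega)]
      · rw [if_pos (by omega), if_neg (by omega)]
    rw [← Finset.sum_subset hsub hvan, Finset.sum_Ico_eq_sum_range,
      show N-i+k-(N-i) = k from by omega]
    have hcongr : ∀ a ∈ range k,
        (if N-2-(N-i+a) ≤ i-2 then (if i-2-(N-2-(N-i+a)) ≤ k-1 then
            ((N-i+a).choose (i-2-(N-2-(N-i+a))) : ℤ) * (-1)^(i-2-(N-2-(N-i+a)))
            * (((N-2-(N-i+a)).choose (k-1-(i-2-(N-2-(N-i+a)))) : ℤ)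
              * (-1)^(k-1-(i-2-(N-2-(N-i+a))))) else 0)
          else 0)
        = ((((N-i)+a).choose a * ((i-2-a).choose (k-1-a)) : ℕ) : ℤ) * (-1)^(k-1) := by
      intro a ha
      rw [mem_range] at ha
      rw [show N-2-(N-i+a) = i-2-a from by omega,
        show i-2-(i-2-a) = a from by omega,
        if_pos (by omega), if_pos (by omega)]
      have hsign : ((-1:ℤ))^a * (-1)^(k-1-a) = (-1)^(k-1) := by
        rw [← pow_add]; congr 1; omega
      push_cast
      calc (((N-i)+a).choose a : ℤ) * (-1)^a * (((i-2-a).choose (k-1-a) : ℤ) * (-1)^(k-1-a))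
          = ((((N-i)+a).choose a : ℤ) * ((i-2-a).choose (k-1-a) : ℤ))
            * ((-1:ℤ)^a * (-1)^(k-1-a)) := by ring
        _ = (((N-i)+a).choose a : ℤ) * ((i-2-a).choose (k-1-a) : ℤ) * (-1)^(k-1) := by
            rw [hsign]
    rw [Finset.sum_congr rfl hcongr, ← Finset.sum_mul, ← Nat.cast_sum,
      sum1nat N k i hk hki hiN, alphaCoef]
    ring
  have hG2 : (((∑ l ∈ range (N-1),
        (1 - C Polynomial.X * X)^l * (1-X)^(N-2-l)
        : Polynomial (Polynomial ℤ))).coeff (i-2)).coeff (k-1)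
      = - alphaCoef i N := by
    rw [finset_sum_coeff, finset_sum_coeff]
    have hterm : ∀ l ∈ range (N-1),
        ((((1 - C Polynomial.X * X)^l * (1-X)^(N-2-l)
          : Polynomial (Polynomial ℤ)).coeff (i-2)).coeff (k-1))
        = (((l.choose (k-1) * ((N-2-l).choose (i-1-k)) : ℕ)) : ℤ)
            * ((-1)^(k-1) * (-1)^(i-1-k)) := by
      intro l _
      rw [term2_coeff l (N-2-l) i k (by omega), show i-2-(k-1) = i-1-k from by omega]
      push_cast
      ring
    rw [Finset.sum_congr rfl hterm, ← Finset.sum_mul, ← Nat.cast_sum,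
      sum2nat N k i hk hki hiN, ← pow_add, show (k-1)+(i-1-k) = i-2 from by omega,
      alphaCoef, show i-1 = (i-2)+1 from by omega, pow_succ]
    ring
  rw [hG1, hG2]
  ring

end AlphaAux

/-- The binomial identity `∑_{n=k}^{i-1} C(N,n) α_k^n α_{i-n}^{N-n} = α_k^N - α_i^N`. -/
theorem alpha_binomial_identity (N k i : ℕ) (hk : 1 ≤ k) (hki : k < i) (hiN : i ≤ N) :
    ∑ n ∈ Ico k i, (Nat.choose N n : ℤ) * alphaCoef k n * alphaCoef (i - n) (N - n)
      = alphaCoef k N - alphaCoef i N := by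
  obtain ⟨M, rfl⟩ : ∃ M, N = M + 2 := ⟨N - 2, by omega⟩
  have hD : AlphaAux.FF (M+2) = Polynomial.X * AlphaAux.GG (M+2) := by
    have h := (AlphaAux.idB M).trans (AlphaAux.idC M).symm
    exact mul_left_cancel₀ (mul_ne_zero AlphaAux.nz1 AlphaAux.nz2) h
  rw [← AlphaAux.coeffF (M+2) k i hk hki hiN, hD, AlphaAux.coeffG (M+2) k i hk hki hiN]
end

section
/- In an associative algebra, if elements b_j(\lambda) and an invertible D(\lambda) satisfy \(b_j(\lambda) D(\mu) = \frac{\lambda-\mu-ig}{\lambda-\mu}D(\mu) b_j(\lambda)\) and \(D(\lambda)D(\mu) = D(\mu)D(\lambda)\), and \(b_j(\lambda) b_k(\mu) = \frac{\mu-\lambda}{\mu-\lambda-ig}(-1)^{[j][k]} b_k(\mu) b_j(\lambda) - \frac{ig}{\mu-\lambda-ig} b_j(\mu) b_k(\lambda)\), then \(a_j(\lambda) := b_j(\lambda)D(\lambda)^{-1}\) satisfies \(a_j(\lambda) a_k(\mu) = \frac{\mu-\lambda}{\mu-\lambda+ig} (-1)^{[j][k]} a_k(\mu) a_j(\lambda)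 - \frac{ig}{\mu-\lambda+ig} a_j(\mu) a_k(\lambda)\). -/
open Complex

/-- If `x * D = q • (D * x)` and `Di` is a two-sided inverse of `D`, then
`Di * x = q • (x * Di)`. -/
lemma inv_exch {A : Type*} [Ring A] [Algebra ℂ A] (x D Di : A) (q : ℂ)
    (h1 : D * Di = 1) (h2 : Di * D = 1) (h : x * D = q • (D * x)) :
    Di * x = q • (x * Di) := by
  calc Di * x = Di * (x * (D * Di)) := by rw [h1, mul_one]
    _ = Di * ((x * D) * Di) := by noncomm_ring
    _ = Di * ((q • (D * x)) * Di) := by rw [h]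
    _ = q • ((Di * D) * (x * Di)) := by
        simp only [smul_mul_assoc, mul_smul_comm, mul_assoc]
    _ = q • (x * Di) := by rw [h2, one_mul]

/-- In an associative `ℂ`-algebra, given elements `b_j(λ)`, `b_j(μ)` and invertible
elements `D(λ)`, `D(μ)` obeying the exchange relations of the quantum monodromy matrix,
the operators `a_j(λ) := b_j(λ) D(λ)⁻¹` satisfy the super-ZF exchange relation. -/
theorem ZF_from_monodromy {A : Type*} [Ring A] [Algebra ℂ A]
    (K : ℕ) (ε : Fin K → ℕ) (g lam mu : ℝ) (hg : g ≠ 0) (hlm : lam ≠ mu)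
    (bl bm : Fin K → A) (Dl Dm Dli Dmi : A)
    (hDl : Dl * Dli = 1 ∧ Dli * Dl = 1)
    (hDm : Dm * Dmi = 1 ∧ Dmi * Dm = 1)
    (hDD : Dl * Dm = Dm * Dl)
    (hbb : ∀ j k : Fin K, bl j * bm k
      = ((((mu : ℂ) - lam) / ((mu : ℂ) - lam - I * g)) * (-1 : ℂ) ^ (ε j * ε k))
          • (bm k * bl j)
        - ((I * g) / ((mu : ℂ) - lam - I * g)) • (bm j * bl k))
    (hbD : ∀ j : Fin K, bl j * Dm
      = ((((lam : ℂ) - mu - I * g) / ((lam : ℂ) - mu)) : ℂ) • (Dm * bl j))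
    (hbD' : ∀ j : Fin K, bm j * Dl
      = ((((mu : ℂ) - lam - I * g) / ((mu : ℂ) - lam)) : ℂ) • (Dl * bm j)) :
    ∀ j k : Fin K, (bl j * Dli) * (bm k * Dmi)
      = ((((mu : ℂ) - lam) / ((mu : ℂ) - lam + I * g)) * (-1 : ℂ) ^ (ε j * ε k))
          • ((bm k * Dmi) * (bl j * Dli))
        - ((I * g) / ((mu : ℂ) - lam + I * g)) • ((bm j * Dmi) * (bl k * Dli)) := by
  intro j k
  set c : ℂ := (mu : ℂ) - lam with hc_def
  have hc : c ≠ 0 := by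
    rw [hc_def, sub_ne_zero]
    exact_mod_cast (Ne.symm hlm)
  have hgC : (g : ℂ) ≠ 0 := by exact_mod_cast hg
  have hcm : c - I * g ≠ 0 := by
    intro h
    have hre := congrArg Complex.re h
    have him := congrArg Complex.im h
    simp [hc_def, Complex.sub_re, Complex.sub_im, Complex.mul_re, Complex.mul_im] at hre him
    exact hg him
  have hcp : c + I * g ≠ 0 := by
    intro h
    have him := congrArg Complex.im h
    simp [hc_def, Complex.add_im, Complex.mul_im] at him
    exact hg him
  -- commutation of the inverses
  have hDliDm : Dli * Dm = (1 : ℂ) • (Dm * Dli) :=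
    inv_exch Dm Dl Dli 1 hDl.1 hDl.2 (by rw [one_smul]; exact hDD.symm)
  have hDmiDli : Dmi * Dli = Dli * Dmi := by
    have := inv_exch Dli Dm Dmi 1 hDm.1 hDm.2 (by rw [one_smul]; rw [one_smul] at hDliDm; exact hDliDm)
    rwa [one_smul] at this
  -- move inverses past the b's
  have hq : ∀ i : Fin K, Dli * bm i = ((c - I * g) / c) • (bm i * Dli) := by
    intro i
    exact inv_exch (bm i) Dl Dli _ hDl.1 hDl.2 (hbD' i)
  have hr : ∀ i : Fin K, Dmi * bl i = ((c + I * g) / c) • (bl i * Dmi) := by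
    intro i
    have h := hbD i
    have h2 : bl i * Dm = ((c + I * g) / c) • (Dm * bl i) := by
      rw [h]
      congr 1
      rw [hc_def]
      have h0 : (lam : ℂ) - mu ≠ 0 := sub_ne_zero.mpr (by exact_mod_cast hlm)
      have h0' : (mu : ℂ) - lam ≠ 0 := sub_ne_zero.mpr (by exact_mod_cast hlm.symm)
      rw [div_eq_div_iff h0 h0']
      ring
    exact inv_exch (bl i) Dm Dmi _ hDm.1 hDm.2 h2
  set p : ℂ := (-1 : ℂ) ^ (ε j * ε k) with hp_def
  -- left-hand side in normal form
  have hL : (bl j * Dli) * (bm k * Dmi)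
      = p • (bm k * (bl j * (Dli * Dmi))) - (I * g / c) • (bm j * (bl k * (Dli * Dmi))) := by
    calc (bl j * Dli) * (bm k * Dmi) = bl j * (Dli * bm k) * Dmi := by noncomm_ring
      _ = ((c - I * g) / c) • ((bl j * bm k) * (Dli * Dmi)) := by
          rw [hq k]; simp only [smul_mul_assoc, mul_smul_comm, mul_assoc]
      _ = ((c - I * g) / c) • (((c / (c - I * g) * p) • (bm k * bl j)
            - (I * g / (c - I * g)) • (bm j * bl k)) * (Dli * Dmi)) := by
          rw [hbb j k]
      _ = (((c - I * g) / c) * (c / (c - I * g) * p)) • (bm k * (bl j * (Dli * Dmi)))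
          - (((c - I * g) / c) * (I * g / (c - I * g))) • (bm j * (bl k * (Dli * Dmi))) := by
          simp only [sub_mul, smul_sub, smul_smul, smul_mul_assoc, mul_assoc]
      _ = p • (bm k * (bl j * (Dli * Dmi))) - (I * g / c) • (bm j * (bl k * (Dli * Dmi))) := by
          congr 2 <;> (field_simp; try ring)
  -- right-hand side pieces in normal form
  have hR : ∀ a b : Fin K, (bm a * Dmi) * (bl b * Dli)
      = ((c + I * g) / c) • (bm a * (bl b * (Dli * Dmi))) := by
    intro a b
    calc (bm a * Dmi) * (bl b * Dli) = bm a * (Dmi * bl b) * Dli := by noncomm_ring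
      _ = ((c + I * g) / c) • ((bm a * bl b) * (Dmi * Dli)) := by
          rw [hr b]; simp only [smul_mul_assoc, mul_smul_comm, mul_assoc]
      _ = ((c + I * g) / c) • (bm a * (bl b * (Dli * Dmi))) := by
          rw [hDmiDli, mul_assoc]
  rw [hL, hR k j, hR j k, smul_smul, smul_smul]
  congr 2 <;> (field_simp; try ring)
end
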